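/- arXiv:1606.00040 — 2 statements merged into one kernel-verified Lean document; each statement's English description precedes it below -/
import Mathlib

section
/- Let κ be a regular uncountable cardinal and let f and g be one-to-one functions whose domains A and B are disjoint subsets of κ. Then there exist nonstationary sets A' ⊆ A and B' ⊆ B such that f[A \ A'] ∩ g[B \ B'] = ∅. -/
/-!
If `f a = g b` with `a ∈ A` and `b ∈ B`, call `b` the partner of `a`; as `A` and `B` are disjoint,
`a ≠ b`. Put into `A'` the points of `A` whose partner is smaller, and into `B'` the points of `B`
whose partner is smaller. The partner map is injective and regressive on `A'`, so `A'` misses the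
club of ordinals closed under its inverse (the injective case of Fodor's lemma); likewise for `B'`.
-/

/-- `C` is a club (closed unbounded) subset of the ordinal `κ`. -/
def IsClubIn (C : Set Ordinal) (κ : Ordinal) : Prop :=
  C ⊆ Set.Iio κ ∧ (∀ α < κ, ∃ β ∈ C, α < β) ∧
    (∀ α < κ, 0 < α → (∀ β < α, ∃ γ ∈ C, β < γ ∧ γ < α) → α ∈ C)

/-- `S` is nonstationary in `κ`: disjoint from some club. -/
def IsNonstationaryIn (S : Set Ordinal) (κ : Ordinal) : Prop :=
  ∃ C, IsClubIn C κ ∧ S ∩ C = ∅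

open Cardinal Ordinal Set Function

namespace Ordinal

noncomputable def closureStep (G : Ordinal → Ordinal) (β : Ordinal) : Ordinal :=
  max (Order.succ β) (⨆ γ : Iio β, G γ + 1)

variable {G : Ordinal → Ordinal}

theorem lt_closureStep (β : Ordinal) : β < closureStep G β :=
  (Order.lt_succ β).trans_le (le_max_left _ _)

theorem apply_lt_closureStep {β γ : Ordinal} (hγ : γ < β) : G γ < closureStep G β :=
  (lt_add_one _).trans_le <|
    (Ordinal.le_iSup (fun γ : Iio β => G γ + 1) ⟨γ, hγ⟩).trans (le_max_right _ _)

theorem closureStep_lt_ord {κ : Cardinal} (hreg : κ.IsRegular)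
    (hG : ∀ γ < κ.ord, G γ < κ.ord) {β : Ordinal} (hβ : β < κ.ord) :
    closureStep G β < κ.ord := by
  refine max_lt ((isSuccLimit_ord hreg.aleph0_le).succ_lt hβ) ?_
  refine lift_iSup_add_one_lt_of_lt_cof ?_ fun γ => hG γ (γ.2.trans hβ)
  rw [← lift_cof, hreg.cof_ord, Cardinal.mk_Iio_ordinal]
  simpa [← lt_ord, ← Cardinal.lift_ord] using hβ

theorem isClubIn_setOf_forall_lt {κ : Cardinal} (hreg : κ.IsRegular) (hunc : ℵ₀ < κ)
    (hG : ∀ γ < κ.ord, G γ < κ.ord) :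
    IsClubIn {α | α < κ.ord ∧ ∀ γ < α, G γ < α} κ.ord := by
  refine ⟨fun α hα => hα.1, fun α hα => ?_, fun α hα _ hcl => ⟨hα, fun γ hγ => ?_⟩⟩
  · refine ⟨nfp (closureStep G) α,
      ⟨nfp_lt_ord_of_isRegular hreg hunc.ne' (fun _ => closureStep_lt_ord hreg hG) hα,
        fun γ hγ => ?_⟩,
      (lt_closureStep α).trans_le (iterate_le_nfp _ α 1)⟩
    obtain ⟨n, hn⟩ := lt_nfp_iff.mp hγ
    calc G γ < closureStep G ((closureStep G)^[n] α) := apply_lt_closureStep hn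
      _ = (closureStep G)^[n + 1] α := (iterate_succ_apply' _ n α).symm
      _ ≤ nfp (closureStep G) α := iterate_le_nfp _ α (n + 1)
  · obtain ⟨β, hβ, hγβ, hβα⟩ := hcl γ hγ
    exact (hβ.2 γ hγβ).trans hβα

end Ordinal

theorem isNonstationaryIn_of_injOn_of_lt {κ : Cardinal} (hreg : κ.IsRegular) (hunc : ℵ₀ < κ)
    {S : Set Ordinal} (hS : S ⊆ Iio κ.ord) {p : Ordinal → Ordinal} (hp : InjOn p S)
    (hlt : ∀ α ∈ S, p α < α) : IsNonstationaryIn S κ.ord := by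
  classical
  -- the values outside `p '' S` are irrelevant, but must stay below `κ`
  set G : Ordinal → Ordinal := fun γ => if γ ∈ p '' S then invFunOn p S γ else 0
  have hG : ∀ γ < κ.ord, G γ < κ.ord := by
    intro γ _
    by_cases h : γ ∈ p '' S
    · simp only [G, h, if_true]
      exact hS (invFunOn_mem h)
    · simp only [G, h, if_false]
      exact (isSuccLimit_ord hreg.aleph0_le).bot_lt
  refine ⟨_, isClubIn_setOf_forall_lt hreg hunc hG, eq_empty_iff_forall_notMem.mpr ?_⟩
  rintro α ⟨hαS, -, hclosed⟩
  have hGp : G (p α) = α := by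
    simp only [G, mem_image_of_mem p hαS, if_true, hp.leftInvOn_invFunOn hαS]
  exact (hGp ▸ hclosed (p α) (hlt α hαS)).false

theorem isNonstationaryIn_setOf_invFunOn_lt {X : Type*} {κ : Cardinal} (hreg : κ.IsRegular)
    (hunc : ℵ₀ < κ) {A : Set Ordinal} (hA : A ⊆ Iio κ.ord) (B : Set Ordinal)
    {f : Ordinal → X} (g : Ordinal → X) (hf : InjOn f A) :
    IsNonstationaryIn {a ∈ A | f a ∈ g '' B ∧ invFunOn g B (f a) < a} κ.ord := by
  refine isNonstationaryIn_of_injOn_of_lt hreg hunc (fun a ha => hA ha.1)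
    (p := invFunOn g B ∘ f) (fun a ha a' ha' h => hf ha.1 ha'.1 ?_) (fun a ha => ha.2.2)
  rw [← invFunOn_eq ha.2.1, ← invFunOn_eq ha'.2.1]
  exact congrArg g h

/-- If `κ` is a regular uncountable cardinal and `f, g` are one-to-one functions whose
domains `A, B` are disjoint subsets of `κ`, then there are nonstationary `A' ⊆ A`,
`B' ⊆ B` with `f[A \ A'] ∩ g[B \ B'] = ∅`. -/
theorem rigid_ideals_stmt0 {X : Type*} (κ : Cardinal) (hreg : κ.IsRegular)
    (hunc : Cardinal.aleph0 < κ)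
    (A B : Set Ordinal) (hA : A ⊆ Set.Iio κ.ord) (hB : B ⊆ Set.Iio κ.ord)
    (hAB : Disjoint A B) (f g : Ordinal → X)
    (hf : Set.InjOn f A) (hg : Set.InjOn g B) :
    ∃ A' B', A' ⊆ A ∧ B' ⊆ B ∧ IsNonstationaryIn A' κ.ord ∧
      IsNonstationaryIn B' κ.ord ∧ f '' (A \ A') ∩ g '' (B \ B') = ∅ := by
  refine ⟨_, _, fun a ha => ha.1, fun b hb => hb.1,
    isNonstationaryIn_setOf_invFunOn_lt hreg hunc hA B g hf,
    isNonstationaryIn_setOf_invFunOn_lt hreg hunc hB A f hg, eq_empty_iff_forall_notMem.mpr ?_⟩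
  rintro _ ⟨⟨a, ⟨haA, haA'⟩, rfl⟩, ⟨b, ⟨hbB, hbB'⟩, hgb⟩⟩
  have hπ : invFunOn g B (f a) = b := hgb ▸ hg.leftInvOn_invFunOn hbB
  have hσ : invFunOn f A (g b) = a := hgb ▸ hf.leftInvOn_invFunOn haA
  have hab : a ≤ b := not_lt.mp fun h => haA' ⟨haA, ⟨b, hbB, hgb⟩, hπ ▸ h⟩
  have hba : b ≤ a := not_lt.mp fun h => hbB' ⟨hbB, ⟨a, haA, hgb.symm⟩, hσ ▸ h⟩
  exact disjoint_left.mp hAB haA (le_antisymm hab hba ▸ hbB)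
end

section
/- Let μ be regular uncountable and let ⟨c_i : i < γ⟩ (γ < μ) be a descending sequence in the poset Code whose conditions are closed bounded subsets of κ with the end-extension ordering, where every ordinal appearing in forbidden sets E_α has V-cofinality > μ. If δ = sup_i max(c_i) has cofinality ≤ γ < μ, then ⋃_i c_i ∪ {δ} is a closed bounded set that is a lower bound of the sequence: the union of an end-extension-decreasing chain of closed bounded sets, together with the supremum of their maxima, is closed, and it avoids the forbidden sets since δ has small cofinality while all forbidden ordinals have cofinality > μ. -/
/-- A set of ordinals is closed if it contains all of its limit points. -/
def IsClosedSet (c : Set Ordinal) : Prop :=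
  ∀ α, 0 < α → (∀ β < α, ∃ γ ∈ c, β < γ ∧ γ < α) → α ∈ c

/-!
Every element `x` of the union lies in some `c j`; comparing `j` with `i`, either `c j ⊆ c i`
or `c i` is an initial segment of `c j` up to `m i`, so `x ≤ m i` puts `x` into `c i`. Hence a
limit point `α < δ` of the union is, below some `m i`, a limit point of the closed set `c i`,
while no point beyond `δ` is a limit point at all. Finally `δ` cannot be forbidden because its
cofinality is at most `|γ| < μ`.
-/

open Set

universe u

def IsEndExtensionChain (γ : Ordinal.{u}) (c : Ordinal.{u} → Set Ordinal.{u})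
    (m : Ordinal.{u} → Ordinal.{u}) : Prop :=
  ∀ i j, i ≤ j → j < γ → c i ⊆ c j ∧ ∀ x ∈ c j, x ≤ m i → x ∈ c i

section Chain

variable {γ : Ordinal.{u}} {c : Ordinal.{u} → Set Ordinal.{u}} {m : Ordinal.{u} → Ordinal.{u}}

theorem le_sSup_image_Iio {i : Ordinal} (hi : i < γ) : m i ≤ sSup (m '' Iio γ) :=
  le_csSup Ordinal.bddAbove_of_small ⟨i, hi, rfl⟩

theorem le_sSup_of_mem_biUnion_union (hmax : ∀ i < γ, ∀ x ∈ c i, x ≤ m i) {x : Ordinal}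
    (hx : x ∈ (⋃ j ∈ Iio γ, c j) ∪ {sSup (m '' Iio γ)}) : x ≤ sSup (m '' Iio γ) := by
  rcases hx with hx | rfl
  · obtain ⟨j, hj, hxj⟩ := mem_iUnion₂.mp hx
    exact (hmax j hj x hxj).trans (le_sSup_image_Iio hj)
  · exact le_rfl

theorem mem_of_mem_biUnion_of_le (hchain : IsEndExtensionChain γ c m) {i x : Ordinal}
    (hi : i < γ) (hx : x ∈ ⋃ j ∈ Iio γ, c j) (hxm : x ≤ m i) : x ∈ c i := by
  obtain ⟨j, hj, hxj⟩ := mem_iUnion₂.mp hx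
  rcases le_total j i with hji | hij
  · exact (hchain j i hji hi).1 hxj
  · exact (hchain i j hij hj).2 x hxj hxm

theorem mem_of_mem_biUnion_union_of_le (hchain : IsEndExtensionChain γ c m)
    (hmem : ∀ i < γ, m i ∈ c i) {i x : Ordinal}
    (hi : i < γ) (hx : x ∈ (⋃ j ∈ Iio γ, c j) ∪ {sSup (m '' Iio γ)}) (hxm : x ≤ m i) :
    x ∈ c i := by
  rcases hx with hx | rfl
  · exact mem_of_mem_biUnion_of_le hchain hi hx hxm
  · rw [le_antisymm hxm (le_sSup_image_Iio hi)]
    exact hmem i hi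

theorem isClosedSet_biUnion_union_sSup (hchain : IsEndExtensionChain γ c m)
    (hclosed : ∀ i < γ, IsClosedSet (c i))
    (hmax : ∀ i < γ, ∀ x ∈ c i, x ≤ m i) :
    IsClosedSet ((⋃ j ∈ Iio γ, c j) ∪ {sSup (m '' Iio γ)}) := by
  intro α hα hlim
  rcases lt_trichotomy α (sSup (m '' Iio γ)) with hlt | rfl | hgt
  · obtain ⟨_, ⟨i, hi, rfl⟩, hαi⟩ := (lt_csSup_iff' Ordinal.bddAbove_of_small).mp hlt
    refine Or.inl (mem_biUnion hi (hclosed i hi α hα fun β hβ => ?_))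
    obtain ⟨g, hg, hβg, hgα⟩ := hlim β hβ
    refine ⟨g, ?_, hβg, hgα⟩
    rcases hg with hg | rfl
    · exact mem_of_mem_biUnion_of_le hchain hi hg (hgα.trans hαi).le
    · exact (hgα.trans hlt).false.elim
  · exact Or.inr rfl
  · obtain ⟨g, hg, hδg, -⟩ := hlim _ hgt
    exact ((le_sSup_of_mem_biUnion_union hmax hg).not_gt hδg).elim

end Chain

theorem rigid_ideals_stmt19_general (mu : Cardinal)
    (γ : Ordinal) (hγ : γ < mu.ord)
    (c : Ordinal → Set Ordinal) (m : Ordinal → Ordinal)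
    (hcond : ∀ i < γ, IsClosedSet (c i) ∧ m i ∈ c i ∧ ∀ x ∈ c i, x ≤ m i)
    (hchain : ∀ i j, i ≤ j → j < γ →
      c i ⊆ c j ∧ ∀ x ∈ c j, x ≤ m i → x ∈ c i)
    (E : Ordinal → Set Ordinal) (hE : ∀ α, ∀ x ∈ E α, mu < Ordinal.cof x)
    (δ : Ordinal) (hδ : δ = sSup (m '' Set.Iio γ))
    (hδcof : Ordinal.cof δ ≤ Ordinal.card γ) :
    IsClosedSet ((⋃ i ∈ Set.Iio γ, c i) ∪ {δ}) ∧
    (∀ x ∈ (⋃ i ∈ Set.Iio γ, c i) ∪ {δ}, x ≤ δ) ∧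
    (∀ i < γ, c i ⊆ (⋃ i ∈ Set.Iio γ, c i) ∪ {δ} ∧
      ∀ x ∈ (⋃ i ∈ Set.Iio γ, c i) ∪ {δ}, x ≤ m i → x ∈ c i) ∧
    (∀ α, δ ∉ E α) := by
  have hclosed i hi := (hcond i hi).1
  have hmem i hi := (hcond i hi).2.1
  have hmax i hi := (hcond i hi).2.2
  have hδ_small : Ordinal.cof δ < mu := hδcof.trans_lt (Cardinal.lt_ord.mp hγ)
  subst hδ
  refine ⟨isClosedSet_biUnion_union_sSup hchain hclosed hmax,
    fun _ => le_sSup_of_mem_biUnion_union hmax,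
    fun i hi => ⟨fun x hx => Or.inl (mem_biUnion hi hx),
      fun x hx hxm => mem_of_mem_biUnion_union_of_le hchain hmem hi hx hxm⟩,
    fun α hδE => (hE α _ hδE).not_gt hδ_small⟩

/-- Lower bounds for descending chains in the coding forcing: let `μ` be regular
uncountable and `⟨c_i : i < γ⟩` (with `γ < μ`) an end-extension-descending chain of
nonempty closed bounded sets of ordinals with maxima `m i`. Suppose every ordinal in any
forbidden set `E α` has cofinality `> μ`, and `δ = sup_i m i` has cofinality at most
`|γ| < μ`. Then `⋃_i c_i ∪ {δ}` is a closed bounded set end-extending every `c_i`, and `δ`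
avoids all forbidden sets. -/
theorem rigid_ideals_stmt19 (mu : Cardinal) (hreg : mu.IsRegular)
    (hunc : Cardinal.aleph0 < mu)
    (γ : Ordinal) (hγpos : 0 < γ) (hγ : γ < mu.ord)
    (c : Ordinal → Set Ordinal) (m : Ordinal → Ordinal)
    (hcond : ∀ i < γ, IsClosedSet (c i) ∧ m i ∈ c i ∧ ∀ x ∈ c i, x ≤ m i)
    (hchain : ∀ i j, i ≤ j → j < γ →
      c i ⊆ c j ∧ ∀ x ∈ c j, x ≤ m i → x ∈ c i)
    (E : Ordinal → Set Ordinal) (hE : ∀ α, ∀ x ∈ E α, mu < Ordinal.cof x)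
    (δ : Ordinal) (hδ : δ = sSup (m '' Set.Iio γ))
    (hδcof : Ordinal.cof δ ≤ Ordinal.card γ) :
    IsClosedSet ((⋃ i ∈ Set.Iio γ, c i) ∪ {δ}) ∧
    (∀ x ∈ (⋃ i ∈ Set.Iio γ, c i) ∪ {δ}, x ≤ δ) ∧
    (∀ i < γ, c i ⊆ (⋃ i ∈ Set.Iio γ, c i) ∪ {δ} ∧
      ∀ x ∈ (⋃ i ∈ Set.Iio γ, c i) ∪ {δ}, x ≤ m i → x ∈ c i) ∧
    (∀ α, δ ∉ E α) :=
  rigid_ideals_stmt19_general mu γ hγ c m hcond hchain E hE δ hδ hδcof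
end
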